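/- Let G be a finite group, p a prime number, and H, K subgroups of G. Then the intersection H ∩ K is a p-subnormal subgroup of both H and K if and only if O^p(H) = O^p(K) (equality as subgroups of G). -/

import Mathlib

/-- `K` is a `p`-subnormal subgroup of `H` (both viewed as subgroups of an ambient group
`G`): there is a chain of subgroups `K = K₀ ≤ K₁ ≤ ⋯ ≤ K_t = H` in which each `K_i` is a
normal subgroup of `K_{i+1}` of index `p`. -/
def IsPSubnormalIn {G : Type*} [Group G] (p : ℕ) (K H : Subgroup G) : Prop :=
  ∃ (t : ℕ) (f : Fin (t + 1) → Subgroup G),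
    f 0 = K ∧ f (Fin.last t) = H ∧
    ∀ i : Fin t, f i.castSucc ≤ f i.succ ∧
      ((f i.castSucc).subgroupOf (f i.succ)).Normal ∧
      (f i.castSucc).relIndex (f i.succ) = p

/-- `O^p(G)`: the intersection of all normal subgroups `N ⊴ G` such that `G/N` is a
`p`-group. -/
def pResidual (p : ℕ) (G : Type*) [Group G] : Subgroup G :=
  sInf {N : Subgroup G | ∃ h : N.Normal, letI := h; IsPGroup p (G ⧸ N)}

/-- For a subgroup `H ≤ G`, the subgroup `O^p(H)` of `H` regarded as a subgroup of `G`. -/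
def pResidualIn {G : Type*} [Group G] (p : ℕ) (H : Subgroup G) : Subgroup G :=
  (pResidual p H).map H.subtype

/-!
For finite `H`, `O^p(H)` is the subgroup generated by the `p'`-elements of `H`. If `A ⊴ B` has
index `p`, every `p'`-element of `B` lies in `A`, its image in `B ⧸ A` having order dividing both
`p` and a number prime to `p`; so `O^p` is constant along `p`-subnormal chains, and
`O^p(H) = O^p(H ⊓ K) = O^p(K)`.

Conversely, if `O^p(H) = O^p(K)` then this group lies in `H ⊓ K`, and `H ⊓ K` corresponds to a
subgroup of the `p`-group `H ⧸ O^p(H)`. In a finite `p`-group every proper subgroup of order `p^n`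
lies in a subgroup of order `p^(n+1)`, in which it has index `p`, the smallest prime divisor of
the order, and is therefore normal. Iterating gives a chain up to the whole group, which pulls
back to `H`.
-/

open Subgroup

section PSubnormal

variable {G G' : Type*} [Group G] [Group G'] {p : ℕ}

def IsPNormalStep (p : ℕ) (A B : Subgroup G) : Prop :=
  A ≤ B ∧ (A.subgroupOf B).Normal ∧ A.relIndex B = p

theorem isPSubnormalIn_iff_reflTransGen {K H : Subgroup G} :
    IsPSubnormalIn p K H ↔ Relation.ReflTransGen (IsPNormalStep p) K H := by
  constructor
  · rintro ⟨t, f, rfl, rfl, hf⟩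
    have : ∀ i : Fin (t + 1), Relation.ReflTransGen (IsPNormalStep p) (f 0) (f i) :=
      Fin.induction .refl fun j ih => ih.tail (hf j)
    exact this _
  · intro h
    induction h using Relation.ReflTransGen.head_induction_on with
    | refl => exact ⟨0, fun _ => H, rfl, rfl, Fin.elim0⟩
    | head hstep _ ih =>
      obtain ⟨t, f, hf0, hlast, hf⟩ := ih
      refine ⟨t + 1, Fin.cons _ f, rfl, hlast, Fin.cases ?_ fun j => ?_⟩
      · change IsPNormalStep p _ (f 0)
        rwa [hf0]
      · exact hf j

theorem IsPNormalStep.map {f : G →* G'} (hf : Function.Injective f) {A B : Subgroup G}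
    (h : IsPNormalStep p A B) : IsPNormalStep p (A.map f) (B.map f) := by
  obtain ⟨hAB, hnormal, hindex⟩ := h
  refine ⟨map_mono hAB, ?_, (relIndex_map_map_of_injective A B hf).trans hindex⟩
  rw [normal_subgroupOf_iff (map_mono hAB)]
  rintro _ _ ⟨a, ha, rfl⟩ ⟨b, hb, rfl⟩
  exact ⟨b * a * b⁻¹, (normal_subgroupOf_iff hAB).mp hnormal a b ha hb, by simp⟩

theorem IsPNormalStep.comap {f : G →* G'} (hf : Function.Surjective f) {A B : Subgroup G'}
    (h : IsPNormalStep p A B) : IsPNormalStep p (A.comap f) (B.comap f) := by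
  obtain ⟨hAB, hnormal, hindex⟩ := h
  refine ⟨comap_mono hAB, ?_, by rw [relIndex_comap, map_comap_eq_self_of_surjective hf, hindex]⟩
  rw [normal_subgroupOf_iff (comap_mono hAB)]
  intro a b ha hb
  simpa using (normal_subgroupOf_iff hAB).mp hnormal (f a) (f b) ha hb

theorem IsPSubnormalIn.map {f : G →* G'} (hf : Function.Injective f) {K H : Subgroup G}
    (h : IsPSubnormalIn p K H) : IsPSubnormalIn p (K.map f) (H.map f) := by
  rw [isPSubnormalIn_iff_reflTransGen] at h ⊢
  exact h.lift _ fun _ _ hstep ↦ hstep.map hf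

theorem IsPSubnormalIn.comap {f : G →* G'} (hf : Function.Surjective f) {K H : Subgroup G'}
    (h : IsPSubnormalIn p K H) : IsPSubnormalIn p (K.comap f) (H.comap f) := by
  rw [isPSubnormalIn_iff_reflTransGen] at h ⊢
  exact h.lift _ fun _ _ hstep ↦ hstep.comap hf

end PSubnormal

section PGroup

variable {P : Type*} [Group P] [Finite P] {p : ℕ} [hp : Fact p.Prime]

theorem IsPGroup.exists_isPNormalStep (hP : IsPGroup p P) {Q : Subgroup P} (hQ : Q ≠ ⊤) :
    ∃ Q', IsPNormalStep p Q Q' := by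
  obtain ⟨n, hn⟩ := IsPGroup.iff_card.mp (hP.to_subgroup Q)
  obtain ⟨m, hm⟩ := IsPGroup.iff_card.mp hP
  have hnm : n < m := by
    have hle : n ≤ m := (Nat.pow_dvd_pow_iff_le_right hp.out.one_lt).mp
      (hn ▸ hm ▸ card_subgroup_dvd_card Q)
    refine hle.lt_of_ne fun h => hQ ((card_eq_iff_eq_top Q).mp ?_)
    rw [hn, hm, h]
  obtain ⟨K, hK, hQK⟩ := Sylow.exists_subgroup_card_pow_succ (hm ▸ pow_dvd_pow p hnm) hn
  have hindex : Q.relIndex K = p := by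
    have := card_mul_index (Q.subgroupOf K)
    rw [Nat.card_congr (subgroupOfEquivOfLe hQK).toEquiv, hn, hK, pow_succ] at this
    exact Nat.eq_of_mul_eq_mul_left (pow_pos hp.out.pos n) this
  refine ⟨K, hQK, normal_of_index_eq_minFac_card ?_, hindex⟩
  rw [← relIndex, hindex, hK, Nat.pow_minFac n.succ_ne_zero, hp.out.minFac_eq]

theorem IsPGroup.isPSubnormalIn_top (hP : IsPGroup p P) (Q : Subgroup P) :
    IsPSubnormalIn p Q ⊤ := by
  rw [isPSubnormalIn_iff_reflTransGen]
  induction h : Q.index using Nat.strong_induction_on generalizing Q with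
  | _ n ih =>
    by_cases hQ : Q = ⊤
    · exact hQ ▸ .refl
    obtain ⟨Q', hstep⟩ := hP.exists_isPNormalStep hQ
    have hlt : Q'.index < n := by
      rw [← h, ← relIndex_mul_index hstep.1, hstep.2.2]
      exact lt_mul_left index_ne_zero_of_finite.bot_lt hp.out.one_lt
    exact .head hstep (ih _ hlt Q' rfl)

end PGroup

section Residual

variable {X G : Type*} [Group X] [Group G] {p : ℕ} [hp : Fact p.Prime]

def pPrimeElements (p : ℕ) (X : Type*) [Group X] : Set X := {x | ¬ p ∣ orderOf x}

instance closure_pPrimeElements_normal : (closure (pPrimeElements p X)).Normal := by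
  refine ⟨fun n hn g => ?_⟩
  have hconj : (closure (pPrimeElements p X)).map (MulAut.conj g).toMonoidHom ≤
      closure (pPrimeElements p X) := by
    rw [MonoidHom.map_closure]
    refine closure_mono ?_
    rintro _ ⟨x, hx, rfl⟩
    change ¬ p ∣ orderOf (MulAut.conj g x)
    rwa [MulEquiv.orderOf_eq]
  exact hconj ⟨n, hn, rfl⟩

theorem pPrimeElements_subset_of_isPGroup {N : Subgroup X} [N.Normal]
    (hN : IsPGroup p (X ⧸ N)) : pPrimeElements p X ⊆ N := by
  intro x hx
  by_contra hxN
  have hx1 : (x : X ⧸ N) ≠ 1 := mt (QuotientGroup.eq_one_iff x).mp hxN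
  exact hx ((hN.dvd_orderOf hx1).trans (orderOf_map_dvd (QuotientGroup.mk' N) x))

theorem isPGroup_quotient_closure_pPrimeElements [Finite X] :
    IsPGroup p (X ⧸ closure (pPrimeElements p X)) := by
  intro y
  induction y using QuotientGroup.induction_on with | H x
  refine ⟨(orderOf x).factorization p, ?_⟩
  rw [← QuotientGroup.mk_pow, QuotientGroup.eq_one_iff]
  apply Subgroup.subset_closure
  have hpart : orderOf (x ^ p ^ (orderOf x).factorization p) = ordCompl[p] (orderOf x) := by
    rw [orderOf_pow, Nat.gcd_eq_right (Nat.ordProj_dvd _ _)]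
  simpa [pPrimeElements, hpart] using Nat.not_dvd_ordCompl hp.out (orderOf_pos x).ne'

theorem pResidual_eq_closure_pPrimeElements [Finite X] :
    pResidual p X = closure (pPrimeElements p X) :=
  le_antisymm (sInf_le ⟨inferInstance, isPGroup_quotient_closure_pPrimeElements⟩) <|
    le_sInf fun _ ⟨_, hN⟩ => (closure_le _).mpr (pPrimeElements_subset_of_isPGroup hN)

theorem pResidualIn_eq_closure [Finite G] (H : Subgroup G) :
    pResidualIn p H = closure ((H : Set G) ∩ pPrimeElements p G) := by
  rw [pResidualIn, pResidual_eq_closure_pPrimeElements, MonoidHom.map_closure]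
  congr 1
  ext g
  constructor
  · rintro ⟨y, hy, rfl⟩
    exact ⟨y.2, by simpa [pPrimeElements, orderOf_coe] using hy⟩
  · rintro ⟨hgH, hg⟩
    exact ⟨⟨g, hgH⟩, by simpa [pPrimeElements, orderOf_mk] using hg, rfl⟩

theorem IsPNormalStep.inter_pPrimeElements_eq {A B : Subgroup G} (h : IsPNormalStep p A B) :
    (A : Set G) ∩ pPrimeElements p G = (B : Set G) ∩ pPrimeElements p G := by
  obtain ⟨hAB, hnormal, hindex⟩ := h
  refine subset_antisymm (Set.inter_subset_inter_left _ hAB) ?_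
  rintro g ⟨hgB, hg⟩
  have hquot : IsPGroup p (B ⧸ A.subgroupOf B) := IsPGroup.of_card (n := 1) (by
    rw [pow_one, ← index_eq_card]; exact hindex)
  have hgA : (⟨g, hgB⟩ : B) ∈ A.subgroupOf B := pPrimeElements_subset_of_isPGroup hquot
    (by simpa [pPrimeElements, orderOf_mk] using hg)
  exact ⟨hgA, hg⟩

theorem IsPSubnormalIn.pResidualIn_eq [Finite G] {K H : Subgroup G}
    (h : IsPSubnormalIn p K H) : pResidualIn p K = pResidualIn p H := by
  rw [isPSubnormalIn_iff_reflTransGen] at h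
  induction h with
  | refl => rfl
  | tail _ hstep ih => rw [ih, pResidualIn_eq_closure, pResidualIn_eq_closure,
      hstep.inter_pPrimeElements_eq]

theorem isPSubnormalIn_top_of_le [Finite X] {N M : Subgroup X} [N.Normal]
    (hN : IsPGroup p (X ⧸ N)) (hNM : N ≤ M) : IsPSubnormalIn p M ⊤ := by
  simpa [comap_map_eq, sup_eq_left.mpr hNM] using
    (hN.isPSubnormalIn_top (M.map (QuotientGroup.mk' N))).comap (QuotientGroup.mk'_surjective N)

theorem isPSubnormalIn_of_pResidualIn_le [Finite G] {L H : Subgroup G} (hLH : L ≤ H)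
    (h : pResidualIn p H ≤ L) : IsPSubnormalIn p L H := by
  have hle : closure (pPrimeElements p H) ≤ L.subgroupOf H := by
    rw [← pResidual_eq_closure_pPrimeElements]
    exact map_le_iff_le_comap.mp h
  simpa [subgroupOf_map_subtype, inf_eq_left.mpr hLH, ← MonoidHom.range_eq_map] using
    (isPSubnormalIn_top_of_le isPGroup_quotient_closure_pPrimeElements hle).map
      H.subtype_injective

end Residual

/-- For a finite group `G`, a prime `p` and subgroups `H, K ≤ G`, the
intersection `H ⊓ K` is a `p`-subnormal subgroup of both `H` and `K` if and only if
`O^p(H) = O^p(K)` as subgroups of `G`. -/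
theorem stmt3 (G : Type*) [Group G] [Finite G] (p : ℕ) (hp : p.Prime) (H K : Subgroup G) :
    (IsPSubnormalIn p (H ⊓ K) H ∧ IsPSubnormalIn p (H ⊓ K) K) ↔
      pResidualIn p H = pResidualIn p K := by
  have := Fact.mk hp
  constructor
  · rintro ⟨hH, hK⟩
    rw [← hH.pResidualIn_eq, ← hK.pResidualIn_eq]
  · intro heq
    have hH : pResidualIn p H ≤ H ⊓ K :=
      le_inf (map_subtype_le _) (heq ▸ map_subtype_le _)
    exact ⟨isPSubnormalIn_of_pResidualIn_le inf_le_left hH,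
      isPSubnormalIn_of_pResidualIn_le inf_le_right (heq ▸ hH)⟩
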